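/- Let X = {0,1}^{ℤ²}, μ the uniform Bernoulli measure on X, and F₃ the additive two-dimensional cellular automaton defined by F₃(x)_{(i,j)} = x_{(i,j+1)} + x_{(i+1,j)} mod 2. Then for every p ≥ 1 and n ∈ ℕ, μ(α_p^{n,F₃}(x)) = 2^{−((2p−1)n + p²)} for every x ∈ X; hence h_μ(F₃,α_p) = (2p−1) log 2 and the always finite entropy is h^{2D}_μ(F₃) = 2 log 2. -/

import Mathlib

open MeasureTheory Filter Set Real

/-- The configuration space `A^{ℤ²}`. -/
abbrev Config (A : Type*) := (ℤ × ℤ) → A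

/-- The horizontal shift `σ₁`. -/
def sigma1 (A : Type*) : Config A → Config A := fun x p => x (p.1 + 1, p.2)

/-- The vertical shift `σ₂`. -/
def sigma2 (A : Type*) : Config A → Config A := fun x p => x (p.1, p.2 + 1)

/-- A two-dimensional cellular automaton: a continuous self-map commuting with both shifts. -/
def IsCA {A : Type*} [TopologicalSpace A] (F : Config A → Config A) : Prop :=
  Continuous F ∧ F ∘ sigma1 A = sigma1 A ∘ F ∧ F ∘ sigma2 A = sigma2 A ∘ F

/-- Signed distance-like linear form of the Euclidean line through `q` making angle `θ`
with the vertical axis (direction `(sin θ, cos θ)`, normal `(cos θ, -sin θ)`). -/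
noncomputable def lineVal (θ : ℝ) (q : ℤ × ℤ) (p : ℝ × ℝ) : ℝ :=
  Real.cos θ * (p.1 - (q.1 : ℝ)) - Real.sin θ * (p.2 - (q.2 : ℝ))

/-- The lattice half plane bounded by the (almost) line `L^θ_q` containing the origin. -/
def halfPlane (θ : ℝ) (q : ℤ × ℤ) : Set (ℤ × ℤ) :=
  {p | 0 ≤ lineVal θ q ((p.1 : ℝ), (p.2 : ℝ)) * lineVal θ q (0, 0)}

/-- `W^θ_q(x)`: the set of configurations agreeing with `x` on the half plane `W^θ_q`. -/
def Wset {A : Type*} (θ : ℝ) (q : ℤ × ℤ) (x : Config A) : Set (Config A) :=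
  {y | ∀ p ∈ halfPlane θ q, y p = x p}

/-- `Λ^F_n(θ)(x)`. -/
noncomputable def LambdaPt {A : Type*} (F : Config A → Config A) (θ : ℝ) (n : ℕ)
    (x : Config A) : ℝ :=
  sInf {s : ℝ | ∃ q : ℤ × ℤ, s = Real.sqrt ((q.1 : ℝ) ^ 2 + (q.2 : ℝ) ^ 2) ∧
    ∀ k : ℕ, 1 ≤ k → k ≤ n → F^[k] '' Wset θ q x ⊆ Wset θ (0, 0) (F^[k] x)}

/-- `Λ^F_n(θ) = max_x Λ^F_n(θ)(x)`. -/
noncomputable def Lambda {A : Type*} (F : Config A → Config A) (θ : ℝ) (n : ℕ) : ℝ :=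
  ⨆ x : Config A, LambdaPt F θ n x

/-- Entropy of the partition whose cell containing `x` is `cell x`:
`H_μ(α) = ∫ -log μ(α(x)) dμ(x)`. -/
noncomputable def Hcell {A : Type*} [MeasurableSpace A] (μ : Measure (Config A))
    (cell : Config A → Set (Config A)) : ℝ :=
  ∫ x, -Real.log ((μ (cell x)).toReal) ∂μ

/-- The cell of the partition `α_p` (p-squared cylinder blocks) containing `x`. -/
def sqCell {A : Type*} (p : ℕ) (x : Config A) : Set (Config A) :=
  {y | ∀ a b : ℕ, a < p → b < p → y ((a : ℤ), (b : ℤ)) = x ((a : ℤ), (b : ℤ))}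

/-- The cell `α_p^{n,F}(x)` of `⋁_{i=0}^{n} F^{-i} α_p` containing `x`. -/
def FCell {A : Type*} (F : Config A → Config A) (p n : ℕ) (x : Config A) : Set (Config A) :=
  {y | ∀ i : ℕ, i ≤ n → F^[i] y ∈ sqCell p (F^[i] x)}

/-- The metric entropy `h_μ(F, α_p)`. -/
noncomputable def entroCA {A : Type*} [MeasurableSpace A] (μ : Measure (Config A))
    (F : Config A → Config A) (p : ℕ) : ℝ :=
  Filter.liminf (fun n : ℕ => Hcell μ (FCell F p n) / (n : ℝ)) Filter.atTop

/-- The always finite entropy `h^{2D}_μ(F) = liminf_p (1/p) h_μ(F, α_p)`. -/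
noncomputable def AFE {A : Type*} [MeasurableSpace A] (μ : Measure (Config A))
    (F : Config A → Config A) : ℝ :=
  Filter.liminf (fun p : ℕ => entroCA μ F p / (p : ℝ)) Filter.atTop

/-- The entropy `h_μ(σ₁,σ₂)` of the two-dimensional shift action, computed with the
generating central-coordinate partition over increasing squares. -/
noncomputable def hShift {A : Type*} [MeasurableSpace A] (μ : Measure (Config A)) : ℝ :=
  Filter.liminf (fun n : ℕ => Hcell μ (sqCell (A := A) n) / (n : ℝ) ^ 2) Filter.atTop

/-- `μ` is invariant and ergodic for the two-dimensional shift action. -/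
def ShiftErgodic {A : Type*} [MeasurableSpace A] (μ : Measure (Config A)) : Prop :=
  MeasurePreserving (sigma1 A) μ μ ∧ MeasurePreserving (sigma2 A) μ μ ∧
    ∀ s : Set (Config A), MeasurableSet s → sigma1 A ⁻¹' s = s → sigma2 A ⁻¹' s = s →
      μ s = 0 ∨ μ s = 1

/-- `μ` is the uniform Bernoulli measure on `{0,1}^{ℤ²}`: every cylinder fixing the
coordinates of a finite set `S` has measure `(1/2)^{|S|}`. -/
def IsUniformBernoulli (μ : Measure (Config (ZMod 2))) : Prop :=
  ∀ (S : Finset (ℤ × ℤ)) (u : (ℤ × ℤ) → ZMod 2),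
    μ {x : Config (ZMod 2) | ∀ p ∈ S, x p = u p} = (1 / 2 : ENNReal) ^ S.card

/-- The additive cellular automaton `F₃(x)_{(i,j)} = x_{(i,j+1)} + x_{(i+1,j)} mod 2`. -/
def F3 : Config (ZMod 2) → Config (ZMod 2) :=
  fun x p => x (p.1, p.2 + 1) + x (p.1 + 1, p.2)



section Aux
open scoped Topology

open scoped Classical


/-- The 0/1 configuration supported on `A`. -/
def valFn (A : Finset (ℤ × ℤ)) : Config (ZMod 2) := fun q => if q ∈ A then 1 else 0

/-- Number of assignments on `S` satisfying `Q`. -/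
noncomputable def cylN (S : Finset (ℤ × ℤ)) (Q : Config (ZMod 2) → Prop) : ℕ :=
  (S.powerset.filter (fun A => Q (valFn A))).card

lemma zmod2_cases (c : ZMod 2) : c = 0 ∨ c = 1 := by revert c; decide

lemma cylMeasurable (S : Finset (ℤ × ℤ)) (u : Config (ZMod 2)) :
    MeasurableSet {y : Config (ZMod 2) | ∀ q ∈ S, y q = u q} := by
  have : {y : Config (ZMod 2) | ∀ q ∈ S, y q = u q} = ⋂ q ∈ (S : Set (ℤ × ℤ)), {y | y q = u q} := by
    ext y; simp
  rw [this]
  refine MeasurableSet.biInter (S.countable_toSet) fun q _ => ?_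
  have : {y : Config (ZMod 2) | y q = u q} = (fun y : Config (ZMod 2) => y q) ⁻¹' {u q} := rfl
  rw [this]
  exact (measurable_pi_apply q) (measurableSet_singleton (u q))

lemma cylCount (μ : Measure (Config (ZMod 2))) (hμ : IsUniformBernoulli μ)
    (S : Finset (ℤ × ℤ)) (Q : Config (ZMod 2) → Prop)
    (hQ : ∀ y z : Config (ZMod 2), (∀ q ∈ S, y q = z q) → Q y → Q z) :
    μ {y | Q y} = (cylN S Q : ENNReal) * (1 / 2) ^ S.card := by
  unfold cylN
  have hset : {y | Q y} = ⋃ A ∈ S.powerset.filter (fun A => Q (valFn A)),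
      {y : Config (ZMod 2) | ∀ q ∈ S, y q = valFn A q} := by
    ext y
    simp only [Set.mem_setOf_eq, Set.mem_iUnion, Finset.mem_filter, Finset.mem_powerset,
      exists_prop]
    constructor
    · intro hy
      refine ⟨S.filter (fun q => y q = 1), ⟨Finset.filter_subset _ _, ?_⟩, ?_⟩
      · refine hQ y _ (fun q hq => ?_) hy
        simp only [valFn, Finset.mem_filter]
        rcases zmod2_cases (y q) with h | h <;> simp [h, hq]
      · intro q hq
        simp only [valFn, Finset.mem_filter]
        rcases zmod2_cases (y q) with h | h <;> simp [h, hq]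
    · rintro ⟨A, ⟨-, hQA⟩, hagree⟩
      exact hQ (valFn A) y (fun q hq => (hagree q hq).symm) hQA
  rw [hset, measure_biUnion_finset ?_ (fun A _ => cylMeasurable S (valFn A))]
  · rw [Finset.sum_congr rfl (fun A _ => hμ S (valFn A)), Finset.sum_const, nsmul_eq_mul]
  · intro A hA B hB hAB
    simp only [Finset.coe_filter, Set.mem_setOf_eq, Finset.mem_powerset] at hA hB
    replace hA := hA.1; replace hB := hB.1
    refine Set.disjoint_left.2 fun y hyA hyB => hAB ?_
    ext q
    constructor
    · intro hq
      have hqS : q ∈ S := hA hq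
      have h1 : y q = valFn A q := hyA q hqS
      have h2 : y q = valFn B q := hyB q hqS
      simp only [valFn, hq, if_pos] at h1
      by_contra hqB
      simp only [valFn, hqB, if_neg, if_false] at h2
      rw [h1] at h2; exact one_ne_zero h2
    · intro hq
      have hqS : q ∈ S := hB hq
      have h1 : y q = valFn B q := hyB q hqS
      have h2 : y q = valFn A q := hyA q hqS
      simp only [valFn, hq, if_pos] at h1
      by_contra hqA
      simp only [valFn, hqA, if_neg, if_false] at h2
      rw [h1] at h2; exact one_ne_zero h2

lemma valFn_agree_of_erase (A : Finset (ℤ × ℤ)) (t q : ℤ × ℤ) (hq : q ≠ t) :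
    valFn (A.erase t) q = valFn A q := by
  simp only [valFn, Finset.mem_erase, hq, true_and, ne_eq, not_false_iff]

lemma halfStep (μ : Measure (Config (ZMod 2))) (hμ : IsUniformBernoulli μ)
    (S T : Finset (ℤ × ℤ)) (t : ℤ × ℤ) (htS : t ∉ S) (htT : t ∉ T)
    (Q : Config (ZMod 2) → Prop)
    (hQ : ∀ y z : Config (ZMod 2), (∀ q ∈ S, y q = z q) → Q y → Q z)
    (g : Config (ZMod 2) → ZMod 2)
    (hg : ∀ y z : Config (ZMod 2), (∀ q ∈ T, y q = z q) → g y = g z) :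
    μ {y | Q y ∧ y t = g y} = (1 / 2 : ENNReal) * μ {y | Q y} := by
  set U := S ∪ T with hU
  have htU : t ∉ U := by simp [hU, htS, htT]
  have hQU : ∀ y z : Config (ZMod 2), (∀ q ∈ U, y q = z q) → Q y → Q z :=
    fun y z h => hQ y z (fun q hq => h q (Finset.mem_union_left _ hq))
  have hgU : ∀ y z : Config (ZMod 2), (∀ q ∈ U, y q = z q) → g y = g z :=
    fun y z h => hg y z (fun q hq => h q (Finset.mem_union_right _ hq))
  have hQ' : ∀ y z : Config (ZMod 2), (∀ q ∈ insert t U, y q = z q) →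
      (Q y ∧ y t = g y) → (Q z ∧ z t = g z) := by
    intro y z h ⟨h1, h2⟩
    have hyz : ∀ q ∈ U, y q = z q := fun q hq => h q (Finset.mem_insert_of_mem hq)
    refine ⟨hQU y z hyz h1, ?_⟩
    rw [← h t (Finset.mem_insert_self t U), h2, hgU y z hyz]
  rw [cylCount μ hμ U Q hQU, cylCount μ hμ (insert t U) _ hQ']
  have hcard : cylN (insert t U) (fun y => Q y ∧ y t = g y) = cylN U Q := by
    unfold cylN
    refine Finset.card_bij' (fun A _ => A.erase t) (fun A _ => if g (valFn A) = 1 then insert t A else A)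
      ?_ ?_ ?_ ?_
    · -- maps into
      intro A hA
      simp only [Finset.mem_filter, Finset.mem_powerset] at hA ⊢
      obtain ⟨hsub, hQA, -⟩ := hA
      constructor
      · intro q hq
        have := hsub (Finset.mem_of_mem_erase hq)
        rcases Finset.mem_insert.1 this with h | h
        · exact absurd h (Finset.ne_of_mem_erase hq)
        · exact h
      · refine hQ _ _ (fun q hq => ?_) hQA
        exact (valFn_agree_of_erase A t q (fun h => htS (h ▸ hq))).symm
    · -- reverse maps into
      intro A hA
      simp only [Finset.mem_filter, Finset.mem_powerset] at hA ⊢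
      obtain ⟨hsub, hQA⟩ := hA
      have htA : t ∉ A := fun h => htU (hsub h)
      by_cases hone : g (valFn A) = 1
      · rw [if_pos hone]
        have hagree : ∀ q ∈ U, valFn (insert t A) q = valFn A q := by
          intro q hq
          have : q ≠ t := fun h => htU (h ▸ hq)
          simp [valFn, Finset.mem_insert, this]
        refine ⟨?_, hQ _ _ (fun q hq => (hagree q (Finset.mem_union_left _ hq)).symm) hQA, ?_⟩
        · intro q hq
          rcases Finset.mem_insert.1 hq with h | h
          · exact h ▸ Finset.mem_insert_self t U
          · exact Finset.mem_insert_of_mem (hsub h)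
        · have h1 : valFn (insert t A) t = 1 := by simp [valFn]
          rw [h1, hg _ _ (fun q hq => (hagree q (Finset.mem_union_right _ hq)))]
          exact hone.symm
      · rw [if_neg hone]
        have hzero : g (valFn A) = 0 := by
          rcases (show ∀ c : ZMod 2, c = 0 ∨ c = 1 by decide) (g (valFn A)) with h | h
          · exact h
          · exact absurd h hone
        refine ⟨fun q hq => Finset.mem_insert_of_mem (hsub hq), hQA, ?_⟩
        have h1 : valFn A t = 0 := by simp [valFn, htA]
        rw [h1, hzero]
    · -- left inverse
      intro A hA
      simp only [Finset.mem_filter, Finset.mem_powerset] at hA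
      obtain ⟨hsub, hQA, hcond⟩ := hA
      have hagree : ∀ q ∈ T, valFn (A.erase t) q = valFn A q :=
        fun q hq => valFn_agree_of_erase A t q (fun h => htT (h ▸ hq))
      by_cases htA : t ∈ A
      · have hA1 : valFn A t = 1 := by simp [valFn, htA]
        have : g (valFn (A.erase t)) = 1 := by
          rw [hg _ _ hagree, ← hcond, hA1]
        rw [if_pos this, Finset.insert_erase htA]
      · have hA0 : valFn A t = 0 := by simp [valFn, htA]
        have : g (valFn (A.erase t)) = 0 := by rw [hg _ _ hagree, ← hcond, hA0]
        rw [if_neg (by rw [this]; exact zero_ne_one), Finset.erase_eq_of_notMem htA]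
    · -- right inverse
      intro A hA
      simp only [Finset.mem_filter, Finset.mem_powerset] at hA
      have htA : t ∉ A := fun h => htU (hA.1 h)
      by_cases hone : g (valFn A) = 1
      · rw [if_pos hone, Finset.erase_insert htA]
      · rw [if_neg hone, Finset.erase_eq_of_notMem htA]
  simp only [hcard, Finset.card_insert_of_notMem htU, pow_succ]
  ring

lemma F3_iter (i : ℕ) (y : Config (ZMod 2)) (u v : ℤ) :
    F3^[i] y (u, v) = ∑ kl ∈ Finset.HasAntidiagonal.antidiagonal i,
      (Nat.choose i kl.1 : ZMod 2) * y (u + kl.1, v + kl.2) := by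
  induction i generalizing u v with
  | zero => simp
  | succ i ih =>
    rw [Function.iterate_succ_apply']
    have hF : F3 (F3^[i] y) (u, v) = F3^[i] y (u, v + 1) + F3^[i] y (u + 1, v) := rfl
    rw [hF, ih, ih]
    rw [Finset.Nat.sum_antidiagonal_succ (f := fun kl =>
      (Nat.choose (i+1) kl.1 : ZMod 2) * y (u + kl.1, v + kl.2))]
    have h3 := Finset.Nat.sum_antidiagonal_succ (f := fun kl =>
      (Nat.choose i kl.1 : ZMod 2) * y (u + kl.1, v + kl.2)) (n := i)
    have h4 := Finset.Nat.sum_antidiagonal_succ' (f := fun kl =>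
      (Nat.choose i kl.1 : ZMod 2) * y (u + kl.1, v + kl.2)) (n := i)
    rw [h4] at h3
    -- h3 : choose i (i+1) term + ∑ (shift snd) = choose i 0 * y(u, v+(i+1)) + ∑ (shift fst)
    simp only [Nat.choose_succ_self, Nat.cast_zero, zero_mul, zero_add, Nat.choose_zero_right,
      Nat.cast_one, one_mul, Nat.choose_succ_succ, Nat.cast_add, add_mul] at h3 ⊢
    push_cast at h3 ⊢
    rw [Finset.sum_add_distrib]
    -- goal: ∑ C(i,k) y(u+k, v+1+l) + ∑ C(i,k) y(u+1+k, v+l)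
    --     = y(u, v+(i+1)) + (∑ C(i,k) y(u+(k+1), v+l) + ∑ C(i,k+1) y(u+(k+1), v+l))
    have ea : ∑ kl ∈ Finset.HasAntidiagonal.antidiagonal i, (Nat.choose i kl.1 : ZMod 2) * y (u + 1 + kl.1, v + kl.2)
        = ∑ kl ∈ Finset.HasAntidiagonal.antidiagonal i, (Nat.choose i kl.1 : ZMod 2) * y (u + (kl.1 + 1), v + kl.2) := by
      refine Finset.sum_congr rfl fun kl _ => ?_; congr 2; push_cast; ring
    have eb : ∑ kl ∈ Finset.HasAntidiagonal.antidiagonal i, (Nat.choose i kl.1 : ZMod 2) * y (u + kl.1, v + 1 + kl.2)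
        = ∑ kl ∈ Finset.HasAntidiagonal.antidiagonal i, (Nat.choose i kl.1 : ZMod 2) * y (u + kl.1, v + (kl.2 + 1)) := by
      refine Finset.sum_congr rfl fun kl _ => ?_; congr 2; push_cast; ring
    rw [ea, eb]
    rw [show (v + (↑i + 1) : ℤ) = v + (i+1 : ℕ) by push_cast; ring] at *
    push_cast at h3 ⊢
    simp only [Nat.succ_eq_add_one, add_zero] at h3 ⊢
    rw [h3]; abel

/-- Coordinates on which `F3^[i] y (u,v)` depends. -/
def condCoords (i : ℕ) (u v : ℤ) : Finset (ℤ × ℤ) :=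
  (Finset.HasAntidiagonal.antidiagonal i).image (fun kl => (u + kl.1, v + kl.2))

lemma F3_depends (i : ℕ) (u v : ℤ) (y z : Config (ZMod 2))
    (h : ∀ q ∈ condCoords i u v, y q = z q) :
    F3^[i] y (u, v) = F3^[i] z (u, v) := by
  rw [F3_iter, F3_iter]
  refine Finset.sum_congr rfl fun kl hkl => ?_
  rw [h _ (Finset.mem_image_of_mem _ hkl)]

variable (p : ℕ)

/-- Boundary cells of the `p × p` square. -/
def Bd : Finset (ℕ × ℕ) :=
  (Finset.range p ×ˢ Finset.range p).filter (fun ab => ab.1 = p - 1 ∨ ab.2 = p - 1)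

lemma mem_Bd (ab : ℕ × ℕ) : ab ∈ Bd p ↔ ab.1 < p ∧ ab.2 < p ∧ (ab.1 = p - 1 ∨ ab.2 = p - 1) := by
  simp [Bd, Finset.mem_filter, Finset.mem_product, and_assoc]

lemma card_Bd (hp : 1 ≤ p) : (Bd p).card = 2 * p - 1 := by
  have : Bd p = ((Finset.range p).image (fun a => (a, p - 1))) ∪
      ((Finset.range (p-1)).image (fun b => (p - 1, b))) := by
    ext ab
    simp only [mem_Bd, Finset.mem_union, Finset.mem_image, Finset.mem_range]
    constructor
    · rintro ⟨h1, h2, h3 | h3⟩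
      · by_cases h4 : ab.2 = p - 1
        · exact Or.inl ⟨ab.1, h1, by rw [← h4]⟩
        · exact Or.inr ⟨ab.2, by omega, by rw [← h3]⟩
      · exact Or.inl ⟨ab.1, h1, by rw [← h3]⟩
    · rintro (⟨a, ha, rfl⟩ | ⟨b, hb, rfl⟩) <;> simp <;> omega
  rw [this, Finset.card_union_of_disjoint, Finset.card_image_of_injective,
    Finset.card_image_of_injective, Finset.card_range, Finset.card_range]
  · omega
  · intro a b hab; simpa using hab
  · intro a b hab; simpa [Prod.ext_iff] using hab
  · simp only [Finset.disjoint_left, Finset.mem_image, Finset.mem_range]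
    rintro ab ⟨a, ha, rfl⟩ ⟨b, hb, hab⟩
    simp only [Prod.ext_iff] at hab
    omega

/-- The fresh coordinate of the boundary condition `(i, ab)`. -/
def tpt (i : ℕ) (ab : ℕ × ℕ) : ℤ × ℤ :=
  if ab.2 = p - 1 then ((ab.1 : ℤ), (ab.2 : ℤ) + i) else ((ab.1 : ℤ) + i, (ab.2 : ℤ))

/-- The index of the fresh coordinate in the antidiagonal. -/
def kl0 (i : ℕ) (ab : ℕ × ℕ) : ℕ × ℕ := if ab.2 = p - 1 then (0, i) else (i, 0)

lemma kl0_mem (i : ℕ) (ab : ℕ × ℕ) : kl0 p i ab ∈ Finset.HasAntidiagonal.antidiagonal i := by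
  unfold kl0; split <;> simp

lemma tpt_coord (i : ℕ) (ab : ℕ × ℕ) :
    tpt p i ab = ((ab.1 : ℤ) + ((kl0 p i ab).1 : ℕ), (ab.2 : ℤ) + ((kl0 p i ab).2 : ℕ)) := by
  unfold tpt kl0; split <;> simp

lemma choose_kl0 (i : ℕ) (ab : ℕ × ℕ) : (Nat.choose i (kl0 p i ab).1 : ZMod 2) = 1 := by
  unfold kl0; split <;> simp

/-- Freshness: the fresh coordinate of condition `(i, ab)` appears in the coordinate set of a
condition `(i', ab')` with `1 ≤ i' ≤ i` only for `i' = i`, `ab' = ab`, at position `kl0`. -/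
lemma fresh (hp : 1 ≤ p) (i i' : ℕ) (hi1 : 1 ≤ i) (hi1' : 1 ≤ i') (hii : i' ≤ i)
    (ab ab' : ℕ × ℕ) (hab : ab ∈ Bd p) (hab' : ab' ∈ Bd p) (kl : ℕ × ℕ)
    (hkl : kl ∈ Finset.HasAntidiagonal.antidiagonal i')
    (heq : tpt p i ab = ((ab'.1 : ℤ) + kl.1, (ab'.2 : ℤ) + kl.2)) :
    i' = i ∧ ab' = ab ∧ kl = kl0 p i ab := by
  rw [mem_Bd] at hab hab'
  rw [Finset.HasAntidiagonal.mem_antidiagonal] at hkl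
  obtain ⟨a, b⟩ := ab; obtain ⟨a', b'⟩ := ab'; obtain ⟨k, l⟩ := kl
  simp only at hab hab' hkl ⊢
  unfold tpt at heq
  unfold kl0
  simp only at heq ⊢
  by_cases hb : b = p - 1
  · rw [if_pos hb] at heq ⊢
    rw [Prod.ext_iff] at heq
    simp only at heq
    obtain ⟨e1, e2⟩ := heq
    have : k = 0 ∧ b' = p - 1 ∧ i' = i ∧ a' = a ∧ l = i := by omega
    rw [Prod.ext_iff, Prod.ext_iff]
    simp only
    omega
  · rw [if_neg hb] at heq ⊢
    rw [Prod.ext_iff] at heq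
    simp only at heq
    obtain ⟨e1, e2⟩ := heq
    rw [Prod.ext_iff, Prod.ext_iff]
    simp only
    omega

lemma tpt_not_sq (hp : 1 ≤ p) (i : ℕ) (hi : 1 ≤ i) (ab : ℕ × ℕ) (a' b' : ℕ)
    (ha' : a' < p) (hb' : b' < p) (hab : ab ∈ Bd p) :
    tpt p i ab ≠ ((a' : ℤ), (b' : ℤ)) := by
  rw [mem_Bd] at hab
  unfold tpt
  intro h
  rw [Prod.ext_iff] at h
  simp only at h
  by_cases hb : ab.2 = p - 1 <;> simp [hb] at h <;> omega

/-- The square as a `Finset` of lattice points. -/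
def Sq (p : ℕ) : Finset (ℤ × ℤ) :=
  (Finset.range p ×ˢ Finset.range p).image (fun ab => ((ab.1 : ℤ), (ab.2 : ℤ)))

lemma mem_Sq (p : ℕ) (q : ℤ × ℤ) :
    q ∈ Sq p ↔ ∃ a b : ℕ, a < p ∧ b < p ∧ q = ((a : ℤ), (b : ℤ)) := by
  simp only [Sq, Finset.mem_image, Finset.mem_product, Finset.mem_range]
  constructor
  · rintro ⟨⟨a, b⟩, ⟨ha, hb⟩, rfl⟩; exact ⟨a, b, ha, hb, rfl⟩
  · rintro ⟨a, b, ha, hb, rfl⟩; exact ⟨(a, b), ⟨ha, hb⟩, rfl⟩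

lemma card_Sq (p : ℕ) : (Sq p).card = p ^ 2 := by
  rw [Sq, Finset.card_image_of_injective, Finset.card_product, Finset.card_range, sq]
  intro a b hab
  simp only [Prod.ext_iff] at hab ⊢
  exact ⟨by exact_mod_cast hab.1, by exact_mod_cast hab.2⟩

/-- The partially-constrained cell. -/
def Eset (p n : ℕ) (B : Finset (ℕ × ℕ)) (x : Config (ZMod 2)) : Set (Config (ZMod 2)) :=
  {y | (∀ ab ∈ Finset.range p ×ˢ Finset.range p,
          y ((ab.1 : ℤ), (ab.2 : ℤ)) = x ((ab.1 : ℤ), (ab.2 : ℤ))) ∧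
       (∀ i : ℕ, 1 ≤ i → i ≤ n → ∀ ab ∈ Bd p,
          F3^[i] y ((ab.1 : ℤ), (ab.2 : ℤ)) = F3^[i] x ((ab.1 : ℤ), (ab.2 : ℤ))) ∧
       (∀ ab ∈ B, F3^[n+1] y ((ab.1 : ℤ), (ab.2 : ℤ)) = F3^[n+1] x ((ab.1 : ℤ), (ab.2 : ℤ)))}

/-- `FCell F3 p n x` equals the boundary-constrained cell. -/
lemma FCell_eq_Eset (p : ℕ) (hp : 1 ≤ p) (n : ℕ) (x : Config (ZMod 2)) :
    FCell F3 p n x = Eset p n ∅ x := by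
  ext y
  simp only [FCell, sqCell, Set.mem_setOf_eq, Eset, Finset.notMem_empty, false_implies,
    implies_true, and_true, Finset.mem_product, Finset.mem_range]
  constructor
  · intro h
    refine ⟨fun ab hab => ?_, fun i hi1 hin ab hab => ?_⟩
    · have := h 0 (Nat.zero_le n) ab.1 ab.2 hab.1 hab.2
      simpa using this
    · rw [mem_Bd] at hab
      exact h i hin ab.1 ab.2 hab.1 hab.2.1
  · rintro ⟨h0, hb⟩
    have key : ∀ i : ℕ, i ≤ n → ∀ a b : ℕ, a < p → b < p →
        F3^[i] y ((a : ℤ), (b : ℤ)) = F3^[i] x ((a : ℤ), (b : ℤ)) := by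
      intro i
      induction i with
      | zero => intro _ a b ha hb'; simpa using h0 (a, b) ⟨ha, hb'⟩
      | succ i ih =>
        intro hin a b ha hb'
        by_cases hbd : a = p - 1 ∨ b = p - 1
        · exact hb (i+1) (by omega) (by omega) (a, b) ((mem_Bd p (a, b)).2 ⟨ha, hb', hbd⟩)
        · push_neg at hbd
          have ha1 : a < p - 1 := by omega
          have hb1 : b < p - 1 := by omega
          have c1 : ((b : ℤ) + 1) = ((b + 1 : ℕ) : ℤ) := by push_cast; ring
          have c2 : ((a : ℤ) + 1) = ((a + 1 : ℕ) : ℤ) := by push_cast; ring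
          have e1 : ∀ z : Config (ZMod 2), F3^[i+1] z ((a : ℤ), (b : ℤ)) =
              F3^[i] z ((a : ℤ), ((b + 1 : ℕ) : ℤ)) + F3^[i] z (((a + 1 : ℕ) : ℤ), (b : ℤ)) := by
            intro z
            rw [Function.iterate_succ_apply', ← c1, ← c2]
            rfl
          rw [e1 y, e1 x, ih (by omega) a (b+1) ha (by omega), ih (by omega) (a+1) b (by omega) hb']
    intro i hi a b ha hb'
    exact key i hi a b ha hb'

/-- Dependence set for `Eset p n B x`. -/
def bigS (p n : ℕ) (B : Finset (ℕ × ℕ)) : Finset (ℤ × ℤ) :=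
  Sq p ∪ (Finset.Icc 1 n ×ˢ Bd p).biUnion
      (fun ib => condCoords ib.1 (ib.2.1 : ℤ) (ib.2.2 : ℤ)) ∪
    B.biUnion (fun ab => condCoords (n+1) (ab.1 : ℤ) (ab.2 : ℤ))

lemma Eset_depends (p n : ℕ) (B : Finset (ℕ × ℕ)) (x y z : Config (ZMod 2))
    (h : ∀ q ∈ bigS p n B, y q = z q) (hy : y ∈ Eset p n B x) : z ∈ Eset p n B x := by
  obtain ⟨h0, h1, h2⟩ := hy
  refine ⟨fun ab hab => ?_, fun i hi1 hin ab hab => ?_, fun ab hab => ?_⟩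
  · rw [← h0 ab hab]
    refine (h _ ?_).symm
    simp only [Finset.mem_product, Finset.mem_range] at hab
    exact Finset.mem_union_left _ (Finset.mem_union_left _
      ((mem_Sq p _).2 ⟨ab.1, ab.2, hab.1, hab.2, rfl⟩))
  · rw [← h1 i hi1 hin ab hab]
    refine (F3_depends i _ _ y z fun q hq => h q ?_).symm
    exact Finset.mem_union_left _ (Finset.mem_union_right _
      (Finset.mem_biUnion.2 ⟨(i, ab), by simp [Finset.mem_product, Finset.mem_Icc, hi1, hin, hab], hq⟩))
  · rw [← h2 ab hab]
    refine (F3_depends (n+1) _ _ y z fun q hq => h q ?_).symm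
    exact Finset.mem_union_right _ (Finset.mem_biUnion.2 ⟨ab, hab, hq⟩)

/-- The function giving the forced value at the fresh coordinate. -/
noncomputable def gfun (p i : ℕ) (ab : ℕ × ℕ) (x : Config (ZMod 2)) :
    Config (ZMod 2) → ZMod 2 :=
  fun y => F3^[i] x ((ab.1 : ℤ), (ab.2 : ℤ)) + F3^[i] y ((ab.1 : ℤ), (ab.2 : ℤ)) + y (tpt p i ab)

lemma cond_iff (p i : ℕ) (ab : ℕ × ℕ) (x y : Config (ZMod 2)) :
    F3^[i] y ((ab.1 : ℤ), (ab.2 : ℤ)) = F3^[i] x ((ab.1 : ℤ), (ab.2 : ℤ)) ↔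
      y (tpt p i ab) = gfun p i ab x y := by
  unfold gfun
  generalize F3^[i] y ((ab.1 : ℤ), (ab.2 : ℤ)) = Y
  generalize F3^[i] x ((ab.1 : ℤ), (ab.2 : ℤ)) = X
  generalize y (tpt p i ab) = c
  revert Y X c; decide

lemma gfun_depends (p : ℕ) (hp : 1 ≤ p) (i : ℕ) (hi : 1 ≤ i) (ab : ℕ × ℕ) (hab : ab ∈ Bd p)
    (x y z : Config (ZMod 2))
    (h : ∀ q ∈ (condCoords i (ab.1 : ℤ) (ab.2 : ℤ)).erase (tpt p i ab), y q = z q) :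
    gfun p i ab x y = gfun p i ab x z := by
  unfold gfun
  have key : F3^[i] y ((ab.1 : ℤ), (ab.2 : ℤ)) + y (tpt p i ab)
      = F3^[i] z ((ab.1 : ℤ), (ab.2 : ℤ)) + z (tpt p i ab) := by
    rw [F3_iter, F3_iter]
    rw [← Finset.add_sum_erase _ _ (kl0_mem p i ab), ← Finset.add_sum_erase _ _ (kl0_mem p i ab)]
    have hco : ∀ w : Config (ZMod 2),
        (Nat.choose i (kl0 p i ab).1 : ZMod 2) *
          w ((ab.1 : ℤ) + ((kl0 p i ab).1 : ℕ), (ab.2 : ℤ) + ((kl0 p i ab).2 : ℕ))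
          = w (tpt p i ab) := by
      intro w; rw [choose_kl0, one_mul, ← tpt_coord]
    rw [hco y, hco z]
    have cancel : ∀ a s : ZMod 2, a + s + a = s := by decide
    rw [cancel, cancel]
    refine Finset.sum_congr rfl fun kl hkl => ?_
    obtain ⟨hne, hmem⟩ := Finset.mem_erase.1 hkl
    have hq : ((ab.1 : ℤ) + kl.1, (ab.2 : ℤ) + kl.2) ∈
        (condCoords i (ab.1 : ℤ) (ab.2 : ℤ)).erase (tpt p i ab) := by
      refine Finset.mem_erase.2 ⟨?_, Finset.mem_image_of_mem _ hmem⟩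
      intro heq
      exact hne (fresh p hp i i hi hi le_rfl ab ab hab hab kl hmem heq.symm).2.2
    rw [h _ hq]
  rw [show F3^[i] x ((ab.1 : ℤ), (ab.2 : ℤ)) + F3^[i] y ((ab.1 : ℤ), (ab.2 : ℤ)) + y (tpt p i ab)
      = F3^[i] x ((ab.1 : ℤ), (ab.2 : ℤ)) + (F3^[i] y ((ab.1 : ℤ), (ab.2 : ℤ)) + y (tpt p i ab))
      from by ring, key]
  ring

lemma tpt_not_bigS (p : ℕ) (hp : 1 ≤ p) (n : ℕ) (B : Finset (ℕ × ℕ)) (hB : B ⊆ Bd p)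
    (ab : ℕ × ℕ) (hab : ab ∈ Bd p) (habB : ab ∉ B) : tpt p (n+1) ab ∉ bigS p n B := by
  intro h
  rcases Finset.mem_union.1 h with h | h
  · rcases Finset.mem_union.1 h with h | h
    · obtain ⟨a', b', ha', hb', heq⟩ := (mem_Sq p _).1 h
      exact tpt_not_sq p hp (n+1) (by omega) ab a' b' ha' hb' hab heq
    · obtain ⟨⟨i, ab'⟩, hmem, hq⟩ := Finset.mem_biUnion.1 h
      simp only [Finset.mem_product, Finset.mem_Icc] at hmem
      obtain ⟨⟨hi1, hin⟩, hab'⟩ := hmem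
      obtain ⟨kl, hkl, heq⟩ := Finset.mem_image.1 hq
      have := fresh p hp (n+1) i (by omega) hi1 (by omega) ab ab' hab hab' kl hkl heq.symm
      omega
  · obtain ⟨ab', hab', hq⟩ := Finset.mem_biUnion.1 h
    obtain ⟨kl, hkl, heq⟩ := Finset.mem_image.1 hq
    have := fresh p hp (n+1) (n+1) (by omega) (by omega) le_rfl ab ab' hab (hB hab') kl hkl heq.symm
    exact habB (this.2.1 ▸ hab')

lemma Eset_measure_B (μ : Measure (Config (ZMod 2))) (hμ : IsUniformBernoulli μ)
    (p : ℕ) (hp : 1 ≤ p) (n : ℕ) (x : Config (ZMod 2)) :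
    ∀ B : Finset (ℕ × ℕ), B ⊆ Bd p →
      μ (Eset p n B x) = μ (Eset p n ∅ x) * (1 / 2 : ENNReal) ^ B.card := by
  intro B
  induction B using Finset.induction_on with
  | empty => intro _; simp
  | insert ab B habB ih =>
    intro hsub
    have hab : ab ∈ Bd p := hsub (Finset.mem_insert_self _ _)
    have hBsub : B ⊆ Bd p := fun q hq => hsub (Finset.mem_insert_of_mem hq)
    have hset : Eset p n (insert ab B) x =
        {y | y ∈ Eset p n B x ∧ y (tpt p (n+1) ab) = gfun p (n+1) ab x y} := by
      ext y
      simp only [Eset, Set.mem_setOf_eq, Finset.forall_mem_insert]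
      rw [← cond_iff p (n+1) ab x y]
      tauto
    rw [hset, halfStep μ hμ (bigS p n B) ((condCoords (n+1) (ab.1 : ℤ) (ab.2 : ℤ)).erase
        (tpt p (n+1) ab)) (tpt p (n+1) ab)
        (tpt_not_bigS p hp n B hBsub ab hab habB) (Finset.notMem_erase _ _)
        (· ∈ Eset p n B x) (fun y z h hy => Eset_depends p n B x y z h hy)
        (gfun p (n+1) ab x)
        (fun y z h => gfun_depends p hp (n+1) (by omega) ab hab x y z h)]
    rw [Set.setOf_mem_eq, ih hBsub, Finset.card_insert_of_notMem habB, pow_succ]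
    ring

lemma Eset_zero (μ : Measure (Config (ZMod 2))) (hμ : IsUniformBernoulli μ)
    (p : ℕ) (x : Config (ZMod 2)) :
    μ (Eset p 0 ∅ x) = (1 / 2 : ENNReal) ^ (p ^ 2) := by
  have hset : Eset p 0 ∅ x = {y : Config (ZMod 2) | ∀ q ∈ Sq p, y q = x q} := by
    ext y
    simp only [Eset, Set.mem_setOf_eq, Finset.notMem_empty, false_implies, implies_true,
      and_true, Finset.mem_product, Finset.mem_range]
    constructor
    · rintro ⟨h0, -⟩ q hq
      obtain ⟨a, b, ha, hb, rfl⟩ := (mem_Sq p q).1 hq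
      exact h0 (a, b) ⟨ha, hb⟩
    · intro h
      refine ⟨fun ab hab => h _ ((mem_Sq p _).2 ⟨ab.1, ab.2, hab.1, hab.2, rfl⟩), ?_⟩
      intro i hi1 hi0; omega
  rw [hset, hμ (Sq p) x, card_Sq]

lemma Eset_succ (p n : ℕ) (x : Config (ZMod 2)) :
    Eset p (n+1) ∅ x = Eset p n (Bd p) x := by
  ext y
  simp only [Eset, Set.mem_setOf_eq, Finset.notMem_empty, false_implies, implies_true, and_true]
  constructor
  · rintro ⟨h0, h1⟩
    exact ⟨h0, fun i hi1 hin ab hab => h1 i hi1 (by omega) ab hab,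
      fun ab hab => h1 (n+1) (by omega) le_rfl ab hab⟩
  · rintro ⟨h0, h1, h2⟩
    refine ⟨h0, fun i hi1 hin ab hab => ?_⟩
    rcases Nat.lt_or_ge i (n+1) with h | h
    · exact h1 i hi1 (by omega) ab hab
    · have : i = n+1 := by omega
      subst this; exact h2 ab hab

lemma Eset_measure (μ : Measure (Config (ZMod 2))) (hμ : IsUniformBernoulli μ)
    (p : ℕ) (hp : 1 ≤ p) (x : Config (ZMod 2)) (n : ℕ) :
    μ (Eset p n ∅ x) = (1 / 2 : ENNReal) ^ (p ^ 2 + n * (2 * p - 1)) := by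
  induction n with
  | zero => simpa using Eset_zero μ hμ p x
  | succ n ih =>
    rw [Eset_succ, Eset_measure_B μ hμ p hp n x (Bd p) le_rfl, ih, card_Bd p hp, ← pow_add]
    congr 1
    ring_nf

lemma FCell_measure (μ : Measure (Config (ZMod 2))) (hμ : IsUniformBernoulli μ)
    (p : ℕ) (hp : 1 ≤ p) (n : ℕ) (x : Config (ZMod 2)) :
    μ (FCell F3 p n x) = (1 / 2 : ENNReal) ^ ((2 * p - 1) * n + p ^ 2) := by
  rw [FCell_eq_Eset p hp n x, Eset_measure μ hμ p hp x n]
  congr 1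
  ring_nf

open Topology in
lemma Hcell_val (μ : Measure (Config (ZMod 2))) [IsProbabilityMeasure μ]
    (hμ : IsUniformBernoulli μ) (p : ℕ) (hp : 1 ≤ p) (n : ℕ) :
    Hcell μ (FCell F3 p n) = (((2 * p - 1) * n + p ^ 2 : ℕ) : ℝ) * Real.log 2 := by
  unfold Hcell
  have hconst : ∀ x : Config (ZMod 2), -Real.log ((μ (FCell F3 p n x)).toReal)
      = (((2 * p - 1) * n + p ^ 2 : ℕ) : ℝ) * Real.log 2 := by
    intro x
    rw [FCell_measure μ hμ p hp n x]
    have h1 : ((1 / 2 : ENNReal) ^ ((2 * p - 1) * n + p ^ 2)).toReal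
        = (1 / 2 : ℝ) ^ ((2 * p - 1) * n + p ^ 2) := by
      rw [ENNReal.toReal_pow]; norm_num
    rw [h1, Real.log_pow]
    have h2 : Real.log (1 / 2) = -Real.log 2 := by
      rw [one_div, Real.log_inv]
    rw [h2]
    ring
  simp only [hconst]
  rw [integral_const]
  simp

lemma entroCA_val (μ : Measure (Config (ZMod 2))) [IsProbabilityMeasure μ]
    (hμ : IsUniformBernoulli μ) (p : ℕ) (hp : 1 ≤ p) :
    entroCA μ F3 p = (2 * (p : ℝ) - 1) * Real.log 2 := by
  unfold entroCA
  have htend : Tendsto (fun n : ℕ => Hcell μ (FCell F3 p n) / (n : ℝ)) atTop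
      (𝓝 ((2 * (p : ℝ) - 1) * Real.log 2)) := by
    have heq : (fun n : ℕ => Hcell μ (FCell F3 p n) / (n : ℝ)) =ᶠ[atTop]
        (fun n : ℕ => (2 * (p : ℝ) - 1) * Real.log 2 + ((p : ℝ) ^ 2 * Real.log 2) / n) := by
      filter_upwards [eventually_ge_atTop 1] with n hn
      rw [Hcell_val μ hμ p hp n]
      have hn0 : (n : ℝ) ≠ 0 := by positivity
      have hcast : (((2 * p - 1) * n + p ^ 2 : ℕ) : ℝ) = (2 * (p : ℝ) - 1) * n + (p : ℝ) ^ 2 := by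
        push_cast [Nat.cast_sub (by omega : 1 ≤ 2 * p)]
        ring
      rw [hcast]
      field_simp
    refine Tendsto.congr' heq.symm ?_
    have h0 : Tendsto (fun n : ℕ => ((p : ℝ) ^ 2 * Real.log 2) / n) atTop (𝓝 0) :=
      tendsto_const_div_atTop_nhds_zero_nat _
    simpa using tendsto_const_nhds.add h0
  exact htend.liminf_eq

lemma AFE_val (μ : Measure (Config (ZMod 2))) [IsProbabilityMeasure μ]
    (hμ : IsUniformBernoulli μ) : AFE μ F3 = 2 * Real.log 2 := by
  unfold AFE
  have htend : Tendsto (fun p : ℕ => entroCA μ F3 p / (p : ℝ)) atTop (𝓝 (2 * Real.log 2)) := by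
    have heq : (fun p : ℕ => entroCA μ F3 p / (p : ℝ)) =ᶠ[atTop]
        (fun p : ℕ => 2 * Real.log 2 + (-Real.log 2) / p) := by
      filter_upwards [eventually_ge_atTop 1] with p hp
      rw [entroCA_val μ hμ p hp]
      have hp0 : (p : ℝ) ≠ 0 := by positivity
      field_simp
      ring
    refine Tendsto.congr' heq.symm ?_
    have h0 : Tendsto (fun p : ℕ => (-Real.log 2) / (p : ℝ)) atTop (𝓝 0) :=
      tendsto_const_div_atTop_nhds_zero_nat _
    simpa using tendsto_const_nhds.add h0
  exact htend.liminf_eq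

end Aux

/-- For `F₃` on `X = {0,1}^{ℤ²}` with the uniform Bernoulli measure `μ`:
`μ(α_p^{n,F₃}(x)) = 2^{−((2p−1)n + p²)}` for all `p ≥ 1`, `n`, `x`; hence
`h_μ(F₃,α_p) = (2p−1) log 2` and `h^{2D}_μ(F₃) = 2 log 2`. -/
theorem AFE_additive_diagonal (μ : Measure (Config (ZMod 2))) [IsProbabilityMeasure μ]
    (hμ : IsUniformBernoulli μ) :
    (∀ p : ℕ, 1 ≤ p → ∀ (n : ℕ) (x : Config (ZMod 2)),
      μ (FCell F3 p n x) = (1 / 2 : ENNReal) ^ ((2 * p - 1) * n + p ^ 2)) ∧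
    (∀ p : ℕ, 1 ≤ p → entroCA μ F3 p = (2 * (p : ℝ) - 1) * Real.log 2) ∧
    AFE μ F3 = 2 * Real.log 2 := by
  refine ⟨fun p hp n x => FCell_measure μ hμ p hp n x,
    fun p hp => entroCA_val μ hμ p hp, AFE_val μ hμ⟩
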